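/- Let A be a p-secondary Artinian R-module and φ: R → S a faithfully flat local homomorphism of Noetherian local rings with dim(S/mS) = 0. Then every attached prime Q of the S-module A ⊗_R S satisfies Q ∩ R = p. -/

import Mathlib

open IsLocalRing TensorProduct

noncomputable section

/-- A module is `p`-secondary: every `x : R` acts surjectively or nilpotently,
and the radical of the annihilator is `p`. -/
def IsSecondary (R : Type) [CommRing R] (M : Type) [AddCommGroup M] [Module R M]
    (p : Ideal R) : Prop :=
  (Module.annihilator R M).radical = p ∧
    ∀ x : R, Function.Surjective (fun m : M => x • m) ∨ ∃ n : ℕ, ∀ m : M, x ^ n • m = 0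

/-- The attached primes of a module: primes `p` such that the module has a
`p`-secondary quotient (for representable, e.g. Artinian, modules this agrees
with the primes occurring in a minimal secondary representation). -/
def attachedPrimes (R : Type) [CommRing R] (M : Type) [AddCommGroup M] [Module R M] :
    Set (Ideal R) :=
  {p | p.IsPrime ∧ ∃ N : Submodule R M, IsSecondary R (M ⧸ N) p}

/-- The `i`-th local cohomology module of `M` with support in `J`. -/
def H (R : Type) [CommRing R] (J : Ideal R) (i : ℕ) (M : Type) [AddCommGroup M]
    [Module R M] : ModuleCat R :=
  (localCohomology J i).obj (ModuleCat.of R M)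

/-- The Krull dimension of a module, as `dim (R / Ann M)`. -/
def mDim (R : Type) [CommRing R] (M : Type) [AddCommGroup M] [Module R M] : WithBot ℕ∞ :=
  ringKrullDim (R ⧸ Module.annihilator R M)

/-! For `x ∈ R`, let `M` be a secondary quotient of `S ⊗[R] A` with `√Ann_S M = Q`, so that
`Q ∩ R = √Ann_R M`. If `x ∈ p`, a power of `x` kills `A`, hence `S ⊗[R] A` and `M`. If `x ∉ p`,
then `x` acts surjectively on `A` (as `A` is secondary), hence on `S ⊗[R] A` by right exactness
and on its quotient `M`; since `M ≠ 0` (because `Q ≠ ⊤`), no power of `x` can kill `M`. -/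

section Annihilator

variable {R : Type*} [CommRing R] {M : Type*} [AddCommGroup M] [Module R M]

theorem Module.notMem_radical_annihilator_of_smul_surjective [Nontrivial M] {x : R}
    (hx : Function.Surjective (x • · : M → M)) : x ∉ (Module.annihilator R M).radical := by
  rintro ⟨n, hn⟩
  have hxn : Function.Surjective (x ^ n • · : M → M) := by
    rw [← smul_iterate]
    exact hx.iterate n
  obtain ⟨m, hm⟩ := exists_ne (0 : M)
  obtain ⟨m', rfl⟩ := hxn m
  exact hm (Module.mem_annihilator.mp hn m')

theorem Module.nontrivial_of_isPrime_radical_annihilator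
    (h : (Module.annihilator R M).radical.IsPrime) : Nontrivial M := by
  rw [← not_subsingleton_iff_nontrivial, ← Module.annihilator_eq_top_iff (R := R)]
  intro htop
  exact h.ne_top (by rw [htop, Ideal.radical_top])

theorem LinearMap.smul_surjective_of_surjective {M' : Type*} [AddCommGroup M'] [Module R M']
    (f : M →ₗ[R] M') (hf : Function.Surjective f) {x : R}
    (hx : Function.Surjective (x • · : M → M)) : Function.Surjective (x • · : M' → M') := by
  intro m'
  obtain ⟨m, rfl⟩ := hf m'
  obtain ⟨m₀, rfl⟩ := hx m
  exact ⟨f m₀, (f.map_smul x m₀).symm⟩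

end Annihilator

section BaseChange

variable {R : Type*} [CommRing R] (S : Type*) [CommRing S] [Algebra R S]
  {A : Type*} [AddCommGroup A] [Module R A]

theorem TensorProduct.smul_surjective_of_smul_surjective {x : R}
    (hx : Function.Surjective (x • · : A → A)) :
    Function.Surjective (x • · : S ⊗[R] A → S ⊗[R] A) := by
  have := LinearMap.lTensor_surjective S (g := DistribSMul.toLinearMap R A x) hx
  rwa [LinearMap.lTensor_smul_action] at this

theorem TensorProduct.annihilator_le_annihilator :
    Module.annihilator R A ≤ Module.annihilator R (S ⊗[R] A) := by
  intro x hx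
  rw [Module.mem_annihilator] at hx ⊢
  intro t
  induction t using TensorProduct.induction_on with
  | zero => exact smul_zero x
  | tmul s a => rw [← tmul_smul, hx a, tmul_zero]
  | add u v hu hv => rw [smul_add, hu, hv, add_zero]

end BaseChange

theorem stmt6_general (R : Type) [CommRing R]
    (S : Type) [CommRing S]
    [Algebra R S]
    (A : Type) [AddCommGroup A] [Module R A]
    (p : Ideal R) (hsec : IsSecondary R A p) :
    ∀ Q ∈ attachedPrimes S (S ⊗[R] A), Q.comap (algebraMap R S) = p := by
  rintro Q ⟨hQ, N, hradQ, -⟩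
  obtain ⟨hradp, hsecA⟩ := hsec
  have hmk : Function.Surjective (N.mkQ.restrictScalars R) := N.mkQ_surjective
  have : Nontrivial ((S ⊗[R] A) ⧸ N) :=
    Module.nontrivial_of_isPrime_radical_annihilator (hradQ ▸ hQ)
  rw [← hradQ, Ideal.comap_radical, Module.comap_annihilator, ← hradp]
  refine le_antisymm (fun x hxQ => ?_) (Ideal.radical_mono ?_)
  · by_contra hxp
    have hx : Function.Surjective (x • · : A → A) :=
      (hsecA x).resolve_right fun ⟨n, hn⟩ => hxp ⟨n, Module.mem_annihilator.mpr hn⟩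
    exact Module.notMem_radical_annihilator_of_smul_surjective
      ((N.mkQ.restrictScalars R).smul_surjective_of_surjective hmk
        (TensorProduct.smul_surjective_of_smul_surjective S hx)) hxQ
  · exact (TensorProduct.annihilator_le_annihilator S).trans
      ((N.mkQ.restrictScalars R).annihilator_le_of_surjective hmk)

/-- If `A` is a `p`-secondary Artinian `R`-module and `R → S` is a faithfully flat
local homomorphism of Noetherian local rings with zero-dimensional closed fiber,
then every attached prime `Q` of the `S`-module `S ⊗_R A` contracts to `p`. -/
theorem stmt6 (R : Type) [CommRing R] [IsNoetherianRing R] [IsLocalRing R]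
    (S : Type) [CommRing S] [IsNoetherianRing S] [IsLocalRing S]
    [Algebra R S] [Module.FaithfullyFlat R S] [IsLocalHom (algebraMap R S)]
    (hfib : ringKrullDim (S ⧸ (maximalIdeal R).map (algebraMap R S)) = 0)
    (A : Type) [AddCommGroup A] [Module R A] [IsArtinian R A]
    (p : Ideal R) (hp : p.IsPrime) (hsec : IsSecondary R A p) :
    ∀ Q ∈ attachedPrimes S (S ⊗[R] A), Q.comap (algebraMap R S) = p :=
  stmt6_general R S A p hsec
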